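/- arXiv:1610.04491 — 5 statements merged into one kernel-verified Lean document; each statement's English description precedes it below -/
import Mathlib

section
/- Let d = 2, x₁ = (1,0), x₂ = (0,1), x₃ = (1−ε, αε) with α > 1, and θ = (1,0). For all sufficiently small ε > 0, the value c(A, θ) of the optimization problem minimizing Σ_{x suboptimal} α(x) Δ_x subject to ‖x‖²_{H(α)⁻¹} ≤ Δ_x²/2 for all suboptimal x equals 2α². -/
/-!
Write `H = !![p, q; q, s]` for the design matrix. Cauchy–Schwarz in the `H⁻¹`-inner product gives
`⟨x₃, e₂⟩² ≤ ‖x₃‖²_{H⁻¹} ‖e₂‖²_H`, i.e. `(aε)² ≤ (ε²/2) s`, so `s = w₁ + w₂ (aε)² ≥ 2a²`; once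
`εa² ≤ 1` the cost `w₁ + w₂ ε` dominates `s`. Conversely the weights `(T, t, 0)` with `t > 2a²` and
`T` large are feasible with cost `t`, so the infimum `2a²` is approached but not attained.
-/

open Matrix

lemma dotProduct_inv_mulVec_fin_two {K : Type*} [Field K] (p q s : K) (v : Fin 2 → K) :
    v ⬝ᵥ (!![p, q; q, s])⁻¹ *ᵥ v = (s * v 0 ^ 2 - 2 * q * v 0 * v 1 + p * v 1 ^ 2) / (p * s - q * q) := by
  rw [inv_def, adjugate_fin_two, det_fin_two_of, Ring.inverse_eq_inv']
  simp [mulVec, dotProduct, Fin.sum_univ_two]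
  ring

/-- Cauchy–Schwarz `⟨v, e₂⟩² ≤ (vᵀ H⁻¹ v) (e₂ᵀ H e₂)` for `H = !![p, q; q, s]`. -/
lemma sq_le_dotProduct_inv_mulVec_mul {p q s : ℝ} (hdet : 0 < p * s - q * q)
    (v : Fin 2 → ℝ) : v 1 ^ 2 ≤ (v ⬝ᵥ (!![p, q; q, s])⁻¹ *ᵥ v) * s := by
  rw [dotProduct_inv_mulVec_fin_two, div_mul_eq_mul_div, le_div_iff₀ hdet]
  nlinarith [sq_nonneg (s * v 0 - q * v 1)]

noncomputable def designMatrix (a ε : ℝ) (w : Fin 3 → ℝ) : Matrix (Fin 2) (Fin 2) ℝ :=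
  w 0 • vecMulVec ![1, 0] ![1, 0] + w 1 • vecMulVec ![0, 1] ![0, 1]
    + w 2 • vecMulVec ![1 - ε, a * ε] ![1 - ε, a * ε]

lemma designMatrix_eq (a ε : ℝ) (w : Fin 3 → ℝ) :
    designMatrix a ε w =
      !![w 0 + w 2 * (1 - ε) ^ 2, w 2 * (1 - ε) * (a * ε);
         w 2 * (1 - ε) * (a * ε), w 1 + w 2 * (a * ε) ^ 2] := by
  ext i j
  fin_cases i <;> fin_cases j <;>
    simp only [designMatrix, Matrix.add_apply, Matrix.smul_apply, vecMulVec_apply, smul_eq_mul,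
      of_apply, Fin.zero_eta, Fin.mk_one, cons_val_zero, cons_val_one, cons_val', cons_val_fin_one,
      empty_val'] <;> ring

lemma det_designMatrix (a ε : ℝ) (w : Fin 3 → ℝ) :
    (designMatrix a ε w).det =
      w 0 * w 1 + w 0 * w 2 * (a * ε) ^ 2 + w 1 * w 2 * (1 - ε) ^ 2 := by
  rw [designMatrix_eq, det_fin_two_of]
  ring

/-- The costs `w₁ Δ₂ + w₂ Δ₃` of the weights satisfying the constraints of `c(A, θ)`. -/
def feasibleCosts (a ε : ℝ) : Set ℝ :=
  {r | ∃ w : Fin 3 → ℝ, (∀ i, 0 ≤ w i) ∧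
    (IsUnit (designMatrix a ε w).det ∧
      ![0, 1] ⬝ᵥ (designMatrix a ε w)⁻¹ *ᵥ ![0, 1] ≤ 1 ^ 2 / 2 ∧
      ![1 - ε, a * ε] ⬝ᵥ (designMatrix a ε w)⁻¹ *ᵥ ![1 - ε, a * ε] ≤ ε ^ 2 / 2) ∧
    r = w 1 * 1 + w 2 * ε}

lemma two_mul_sq_le_of_mem_feasibleCosts {a ε r : ℝ} (hε : 0 < ε) (hεa : ε * a ^ 2 ≤ 1)
    (hr : r ∈ feasibleCosts a ε) : 2 * a ^ 2 ≤ r := by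
  obtain ⟨w, hw, ⟨hunit, -, hx₃⟩, rfl⟩ := hr
  have hdet_pos : 0 < (designMatrix a ε w).det := by
    refine lt_of_le_of_ne ?_ (isUnit_iff_ne_zero.mp hunit).symm
    rw [det_designMatrix]
    have := hw 0; have := hw 1; have := hw 2
    positivity
  rw [designMatrix_eq] at hdet_pos hx₃
  rw [det_fin_two_of] at hdet_pos
  have hs : 0 ≤ w 1 + w 2 * (a * ε) ^ 2 := by
    have := hw 1; have := hw 2
    positivity
  have hCS := sq_le_dotProduct_inv_mulVec_mul hdet_pos ![1 - ε, a * ε]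
  have hs_ge : 2 * a ^ 2 ≤ w 1 + w 2 * (a * ε) ^ 2 := by
    simp only [cons_val_one, cons_val_zero] at hCS
    have := (hCS.trans (mul_le_mul_of_nonneg_right hx₃ hs))
    refine le_of_mul_le_mul_left ?_ (pow_pos hε 2)
    linarith
  have hcost : w 2 * (a * ε) ^ 2 ≤ w 2 * ε := by
    have : ε * (ε * a ^ 2) ≤ ε := by nlinarith
    nlinarith [hw 2]
  linarith

lemma mem_feasibleCosts_of_lt {a ε t : ℝ} (hε : 0 < ε) (ht₂ : 2 ≤ t) (ht : 2 * a ^ 2 < t) :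
    t ∈ feasibleCosts a ε := by
  have ht₀ : 0 < t := by linarith
  have hgap : 0 < ε ^ 2 * (t - 2 * a ^ 2) := by nlinarith [pow_pos hε 2]
  -- any `T` with `T ε² (t - 2a²) ≥ 2 t (1-ε)²` makes the `x₃`-constraint hold
  set T := (2 * t * (1 - ε) ^ 2 + 1) / (ε ^ 2 * (t - 2 * a ^ 2))
  have hT₀ : 0 < T := by positivity
  have hTgap : T * (ε ^ 2 * (t - 2 * a ^ 2)) = 2 * t * (1 - ε) ^ 2 + 1 :=
    div_mul_cancel₀ _ hgap.ne'
  have hH : designMatrix a ε ![T, t, 0] = !![T, 0; 0, t] := by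
    rw [designMatrix_eq]
    simp
  have hdet : 0 < T * t - 0 * 0 := by nlinarith
  refine ⟨![T, t, 0], ?_, ⟨?_, ?_, ?_⟩, by simp⟩
  · intro i
    fin_cases i <;> simp [hT₀.le, ht₀.le]
  · rw [hH, det_fin_two_of]
    exact isUnit_iff_ne_zero.mpr hdet.ne'
  · rw [hH, dotProduct_inv_mulVec_fin_two, div_le_iff₀ hdet]
    simp only [cons_val_one, cons_val_zero]
    nlinarith
  · rw [hH, dotProduct_inv_mulVec_fin_two, div_le_iff₀ hdet]
    simp only [cons_val_one, cons_val_zero]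
    nlinarith

lemma sInf_feasibleCosts {a ε : ℝ} (ha : 1 ≤ a ^ 2) (hε : 0 < ε) (hεa : ε * a ^ 2 ≤ 1) :
    sInf (feasibleCosts a ε) = 2 * a ^ 2 := by
  refine csInf_eq_of_forall_ge_of_forall_gt_exists_lt
    ⟨2 * a ^ 2 + 1, mem_feasibleCosts_of_lt hε (by linarith) (by linarith)⟩
    (fun r hr => two_mul_sq_le_of_mem_feasibleCosts hε hεa hr) fun u hu => ?_
  exact ⟨(2 * a ^ 2 + u) / 2, mem_feasibleCosts_of_lt hε (by linarith) (by linarith),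
    by linarith⟩

/-- For the counter-example action set `{(1,0), (0,1), (1−ε, αε)}` with `θ = (1,0)` and `α > 1`,
the optimal asymptotic constant `c(A, θ)` equals `2α²` for all sufficiently small `ε > 0`. -/
theorem stmt9 (a : ℝ) (ha : 1 < a) :
    ∃ ε₀ > 0, ∀ ε : ℝ, 0 < ε → ε < ε₀ →
      (let x₁ : Fin 2 → ℝ := ![1, 0]
       let x₂ : Fin 2 → ℝ := ![0, 1]
       let x₃ : Fin 2 → ℝ := ![1 - ε, a * ε]
       sInf {r : ℝ | ∃ w : Fin 3 → ℝ, (∀ i, 0 ≤ w i) ∧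
          (let H := w 0 • vecMulVec x₁ x₁ + w 1 • vecMulVec x₂ x₂ + w 2 • vecMulVec x₃ x₃
           IsUnit H.det ∧
           x₂ ⬝ᵥ H⁻¹.mulVec x₂ ≤ 1 ^ 2 / 2 ∧
           x₃ ⬝ᵥ H⁻¹.mulVec x₃ ≤ ε ^ 2 / 2) ∧
          r = w 1 * 1 + w 2 * ε} = 2 * a ^ 2) := by
  have ha₂ : 1 ≤ a ^ 2 := by nlinarith
  refine ⟨1 / a ^ 2, by positivity, fun ε hε hεa => ?_⟩
  have hεa' : ε * a ^ 2 ≤ 1 := ((lt_div_iff₀ (by positivity)).mp hεa).le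
  exact sInf_feasibleCosts ha₂ hε hεa'
end

section
/- If each element x_i of a barycentric spanner B = {x₁,…,x_d} has been played m times and G = m Σ_{i=1}^d x_i x_iᵀ is invertible, then for every x in the spanned set A, ‖x‖_{G⁻¹} ≤ d/√m. -/
/-!
Since `G ⪰ m bᵢ bᵢᵀ`, each spanner element satisfies `‖bᵢ‖²_{G⁻¹} ≤ 1/m`. The map
`v ↦ ‖v‖_{G⁻¹} = ‖√(G⁻¹) v‖₂` is a seminorm, so for `x = Σ cᵢ bᵢ` with `|cᵢ| ≤ 1` the triangle
inequality gives `‖x‖_{G⁻¹} ≤ Σ |cᵢ| ‖bᵢ‖_{G⁻¹} ≤ d/√m`.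
-/

open Matrix Finset

namespace Matrix

variable {ι n : Type*} [Fintype ι] [Fintype n]

theorem dotProduct_sum_vecMulVec_self_mulVec (b : ι → n → ℝ) (w : n → ℝ) :
    w ⬝ᵥ (∑ i, vecMulVec (b i) (b i)) *ᵥ w = ∑ i, (b i ⬝ᵥ w) ^ 2 := by
  simp only [sum_mulVec, dotProduct_sum, vecMulVec_mulVec, op_smul_eq_smul, dotProduct_smul,
    smul_eq_mul, fun i => dotProduct_comm w (b i), sq]

theorem posSemidef_sum_vecMulVec_self (b : ι → n → ℝ) :
    (∑ i, vecMulVec (b i) (b i)).PosSemidef :=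
  posSemidef_sum _ fun i _ => by simpa using posSemidef_vecMulVec_self_star (b i)

open scoped MatrixOrder in
theorem PosSemidef.exists_sqrt_dotProduct_mulVec_eq_norm [DecidableEq n] {M : Matrix n n ℝ}
    (hM : M.PosSemidef) : ∃ B : Matrix n n ℝ, ∀ v : n → ℝ,
      √(v ⬝ᵥ M *ᵥ v) = ‖WithLp.toLp 2 (B *ᵥ v)‖ := by
  refine ⟨CFC.sqrt M, fun v => ?_⟩
  have hsq : CFC.sqrt M * CFC.sqrt M = M := CFC.sqrt_mul_sqrt_self M hM.nonneg
  have hsymm : (CFC.sqrt M)ᵀ = CFC.sqrt M := (CFC.sqrt_nonneg M).posSemidef.isHermitian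
  generalize CFC.sqrt M = S at hsq hsymm ⊢
  rw [EuclideanSpace.norm_eq, ← hsq, ← mulVec_mulVec, dotProduct_mulVec, ← mulVec_transpose, hsymm]
  simp [dotProduct, sq]

theorem PosSemidef.sqrt_dotProduct_mulVec_sum_smul_le [DecidableEq n] {M : Matrix n n ℝ}
    (hM : M.PosSemidef) (c : ι → ℝ) (v : ι → n → ℝ) :
    √((∑ i, c i • v i) ⬝ᵥ M *ᵥ ∑ i, c i • v i) ≤ ∑ i, |c i| * √(v i ⬝ᵥ M *ᵥ v i) := by
  obtain ⟨B, hB⟩ := hM.exists_sqrt_dotProduct_mulVec_eq_norm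
  rw [hB, mulVec_sum, WithLp.toLp_sum]
  refine (norm_sum_le _ _).trans_eq ?_
  simp [hB, mulVec_smul, norm_smul]

theorem dotProduct_inv_mulVec_le_inv [DecidableEq n] {G : Matrix n n ℝ} (hG : IsUnit G.det)
    {m : ℝ} (hm : 0 < m) {x : n → ℝ} (hx : ∀ w, m * (x ⬝ᵥ w) ^ 2 ≤ w ⬝ᵥ G *ᵥ w) :
    x ⬝ᵥ G⁻¹ *ᵥ x ≤ m⁻¹ := by
  set t := x ⬝ᵥ G⁻¹ *ᵥ x
  -- at `w = G⁻¹ x` the hypothesis reads `m t² ≤ t`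
  have : m * t ^ 2 ≤ t := by
    simpa [mulVec_mulVec, mul_nonsing_inv G hG, dotProduct_comm] using hx (G⁻¹ *ᵥ x)
  rcases le_or_gt t 0 with ht | ht
  · exact ht.trans (inv_pos.2 hm).le
  · rw [← one_div, le_div_iff₀ hm]
    nlinarith

end Matrix

theorem stmt11_general {d : ℕ} (A : Finset (Fin d → ℝ)) (b : Fin d → (Fin d → ℝ))
    (hspanner : ∀ x ∈ A, ∃ c : Fin d → ℝ, (∀ i, |c i| ≤ 1) ∧ x = ∑ i, c i • b i)
    (m : ℕ) (hm : 0 < m)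
    (G : Matrix (Fin d) (Fin d) ℝ) (hG : G = (m : ℝ) • ∑ i, vecMulVec (b i) (b i))
    (hinv : IsUnit G.det) :
    ∀ x ∈ A, Real.sqrt (x ⬝ᵥ G⁻¹.mulVec x) ≤ d / Real.sqrt m := by
  intro x hx
  obtain ⟨c, hc, rfl⟩ := hspanner x hx
  have hm' : (0 : ℝ) < m := by exact_mod_cast hm
  have hGinv : G⁻¹.PosSemidef := (hG ▸ (posSemidef_sum_vecMulVec_self b).smul hm'.le).inv
  have hb : ∀ i, b i ⬝ᵥ G⁻¹ *ᵥ b i ≤ (m : ℝ)⁻¹ := fun i =>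
    dotProduct_inv_mulVec_le_inv hinv hm' fun w => by
      rw [hG, smul_mulVec, dotProduct_smul, smul_eq_mul, dotProduct_sum_vecMulVec_self_mulVec]
      gcongr
      exact single_le_sum (f := fun j => (b j ⬝ᵥ w) ^ 2) (fun j _ => sq_nonneg _) (mem_univ i)
  calc √((∑ i, c i • b i) ⬝ᵥ G⁻¹ *ᵥ ∑ i, c i • b i)
      ≤ ∑ i, |c i| * √(b i ⬝ᵥ G⁻¹ *ᵥ b i) := hGinv.sqrt_dotProduct_mulVec_sum_smul_le c b
    _ ≤ ∑ _i : Fin d, 1 * √((m : ℝ)⁻¹) := by gcongr with i; exacts [hc i, hb i]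
    _ = d / √m := by simp [Real.sqrt_inv, div_eq_mul_inv]

/-- If each element of a barycentric spanner has been played `m` times, so that
`G = m Σ_i x_i x_iᵀ`, and `G` is invertible, then `‖x‖_{G⁻¹} ≤ d/√m` for all `x ∈ A`. -/
theorem stmt11 {d : ℕ} (A : Finset (Fin d → ℝ)) (b : Fin d → (Fin d → ℝ))
    (hbA : ∀ i, b i ∈ A)
    (hspanner : ∀ x ∈ A, ∃ c : Fin d → ℝ, (∀ i, |c i| ≤ 1) ∧ x = ∑ i, c i • b i)
    (m : ℕ) (hm : 0 < m)
    (G : Matrix (Fin d) (Fin d) ℝ) (hG : G = (m : ℝ) • ∑ i, vecMulVec (b i) (b i))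
    (hinv : IsUnit G.det) :
    ∀ x ∈ A, Real.sqrt (x ⬝ᵥ G⁻¹.mulVec x) ≤ d / Real.sqrt m :=
  stmt11_general A b hspanner m hm G hG hinv
end

section
/- Let T(Δ) be a solution of: minimize Σ_x T_x Δ_x over T ∈ [0,∞]^A subject to ‖x‖²_{H_T†} ≤ Δ_x²/f for all x ∈ A, where H_T = Σ_x T_x x xᵀ, f > 0, and A ⊂ ℝ^d spans ℝ^d with a unique optimal arm. Then Σ_{x: Δ_x>0} T_x ≤ 2 d³ f Δ_max / Δ_min³. -/
open Matrix Finset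
open scoped ENNReal

/-! Compare the optimal allocation with the explicit allocation `S` that puts infinite weight
on `x*` and weight `c = 2d²f/Δ_min²` on each spanner point. Writing `x = Σ cᵢ bᵢ` with `|cᵢ| ≤ 1`,
Cauchy–Schwarz gives `⟨x,v⟩² ≤ d² Σ_{y ∈ B} ⟨y,v⟩²`, so `‖x‖²_{H_S†} ≤ d²/c ≤ Δ_x²/f` and `S` is
feasible; the infinite weight costs nothing because `Δ_{x*} = 0`. Hence
`Δ_min Σ_{Δ_x>0} T_x ≤ cost T ≤ cost S ≤ d c Δ_max`. -/

/-- The squared confidence width `‖x‖²_{H_T†}` of `x` under the allocation `T`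
(values in `[0,∞]`), expressed through the variational formula
`‖x‖²_{H_T†} = sup_v ⟨x,v⟩² / (Σ_y T_y ⟨y,v⟩²)` (with `a/0 = ∞` for `a ≠ 0`). -/
noncomputable def width {d : ℕ} (A : Finset (Fin d → ℝ)) (T : (Fin d → ℝ) → ℝ≥0∞)
    (x : Fin d → ℝ) : ℝ≥0∞ :=
  ⨆ v : Fin d → ℝ,
    ENNReal.ofReal ((x ⬝ᵥ v) ^ 2) / ∑ y ∈ A, T y * ENNReal.ofReal ((y ⬝ᵥ v) ^ 2)

theorem sq_sum_mul_le_card_sq_mul {ι : Type*} [Fintype ι] (c a : ι → ℝ)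
    (hc : ∀ i, |c i| ≤ 1) (M : ℝ) (ha : ∀ i, a i ^ 2 ≤ M) :
    (∑ i, c i * a i) ^ 2 ≤ (Fintype.card ι : ℝ) ^ 2 * M := by
  have hterm : ∀ i, (c i * a i) ^ 2 ≤ M := fun i => by
    rw [mul_pow, ← sq_abs (c i)]
    calc |c i| ^ 2 * a i ^ 2 ≤ 1 * a i ^ 2 := by
          gcongr
          exact pow_le_one₀ (abs_nonneg _) (hc i)
      _ ≤ M := by rw [one_mul]; exact ha i
  calc (∑ i, c i * a i) ^ 2 ≤ Fintype.card ι * ∑ i, (c i * a i) ^ 2 := by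
        simpa using sq_sum_le_card_mul_sum_sq (s := univ) (f := fun i => c i * a i)
    _ ≤ Fintype.card ι * (Fintype.card ι * M) := by
        gcongr
        simpa using sum_le_sum fun i (_ : i ∈ univ) => hterm i
    _ = (Fintype.card ι : ℝ) ^ 2 * M := by ring

section Width

variable {d : ℕ} {A : Finset (Fin d → ℝ)} {T : (Fin d → ℝ) → ℝ≥0∞} {x : Fin d → ℝ}

theorem width_eq_zero_of_eq_top (hx : x ∈ A) (hT : T x = ⊤) : width A T x = 0 := by
  refine le_antisymm (iSup_le fun v => ?_) bot_le
  by_cases hxv : x ⬝ᵥ v = 0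
  · simp [hxv]
  have hden : ∑ y ∈ A, T y * ENNReal.ofReal ((y ⬝ᵥ v) ^ 2) = ⊤ := by
    refine top_le_iff.mp ?_
    calc ⊤ = T x * ENNReal.ofReal ((x ⬝ᵥ v) ^ 2) := by
          rw [hT, ENNReal.top_mul (by simpa using hxv)]
      _ ≤ _ := single_le_sum (f := fun y => T y * ENNReal.ofReal ((y ⬝ᵥ v) ^ 2))
          (fun _ _ => zero_le) hx
  simp [hden]

theorem width_le_of_le_mul {r : ℝ≥0∞}
    (h : ∀ v, ENNReal.ofReal ((x ⬝ᵥ v) ^ 2) ≤ r * ∑ y ∈ A, T y * ENNReal.ofReal ((y ⬝ᵥ v) ^ 2)) :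
    width A T x ≤ r :=
  iSup_le fun v => ENNReal.div_le_of_le_mul (h v)

theorem width_le_of_spanner (b : Fin d → (Fin d → ℝ)) (hbA : ∀ i, b i ∈ A)
    {c : ℝ} (hc : 0 < c) (hT : ∀ i, ENNReal.ofReal c ≤ T (b i))
    (co : Fin d → ℝ) (hco : ∀ i, |co i| ≤ 1) (hx : x = ∑ i, co i • b i) :
    width A T x ≤ ENNReal.ofReal (d ^ 2 / c) := by
  refine width_le_of_le_mul fun v => ?_
  set B := image b univ
  set M := ∑ y ∈ B, (y ⬝ᵥ v) ^ 2
  have hnum : (x ⬝ᵥ v) ^ 2 ≤ d ^ 2 * M := by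
    have hbM : ∀ i, (b i ⬝ᵥ v) ^ 2 ≤ M := fun i =>
      single_le_sum (f := fun y => (y ⬝ᵥ v) ^ 2) (fun _ _ => sq_nonneg _)
        (mem_image_of_mem b (mem_univ i))
    simpa [hx, sum_dotProduct, smul_dotProduct] using
      sq_sum_mul_le_card_sq_mul co (fun i => b i ⬝ᵥ v) hco M hbM
  have hden : ENNReal.ofReal (c * M) ≤ ∑ y ∈ A, T y * ENNReal.ofReal ((y ⬝ᵥ v) ^ 2) := by
    rw [ENNReal.ofReal_mul hc.le, ENNReal.ofReal_sum_of_nonneg fun _ _ => sq_nonneg _, mul_sum]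
    refine (sum_le_sum fun y hy => ?_).trans
      (sum_le_sum_of_subset (image_subset_iff.mpr fun i _ => hbA i))
    obtain ⟨i, -, rfl⟩ := mem_image.mp hy
    exact mul_le_mul_left (hT i) _
  calc ENNReal.ofReal ((x ⬝ᵥ v) ^ 2) ≤ ENNReal.ofReal (d ^ 2 / c * (c * M)) := by
        apply ENNReal.ofReal_le_ofReal
        rwa [show (d : ℝ) ^ 2 / c * (c * M) = d ^ 2 * M by field_simp]
    _ ≤ _ := by
        rw [ENNReal.ofReal_mul (by positivity)]
        exact mul_le_mul_right hden _

end Width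

noncomputable def spannerAllocation {d : ℕ} (xstar : Fin d → ℝ) (B : Finset (Fin d → ℝ)) (c : ℝ) :
    (Fin d → ℝ) → ℝ≥0∞ :=
  fun y => if y = xstar then ⊤ else if y ∈ B then ENNReal.ofReal c else 0

section SpannerAllocation

variable {d : ℕ} {A : Finset (Fin d → ℝ)} {b : Fin d → (Fin d → ℝ)} {xstar : Fin d → ℝ}
  {Δ : (Fin d → ℝ) → ℝ} {Δmin Δmax : ℝ}

theorem ofReal_le_spannerAllocation {B : Finset (Fin d → ℝ)} {y : Fin d → ℝ} (hy : y ∈ B)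
    (c : ℝ) : ENNReal.ofReal c ≤ spannerAllocation xstar B c y := by
  unfold spannerAllocation
  split_ifs <;> simp

theorem width_spannerAllocation_le (hbA : ∀ i, b i ∈ A)
    (hspanner : ∀ x ∈ A, ∃ c : Fin d → ℝ, (∀ i, |c i| ≤ 1) ∧ x = ∑ i, c i • b i)
    (hΔmin : 0 < Δmin) (hgap : ∀ x ∈ A, x ≠ xstar → Δmin ≤ Δ x)
    {f : ℝ} (hf : 0 < f) {x : Fin d → ℝ} (hx : x ∈ A) :
    width A (spannerAllocation xstar (image b univ) (2 * d ^ 2 * f / Δmin ^ 2)) x ≤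
      ENNReal.ofReal (Δ x ^ 2 / f) := by
  by_cases hxstar : x = xstar
  · rw [width_eq_zero_of_eq_top hx (by simp [spannerAllocation, hxstar])]
    exact zero_le
  rcases d.eq_zero_or_pos with rfl | hd
  · exact absurd (Subsingleton.elim x xstar) hxstar
  obtain ⟨co, hco, hxco⟩ := hspanner x hx
  have hc : 0 < 2 * d ^ 2 * f / Δmin ^ 2 := by positivity
  refine (width_le_of_spanner b hbA hc
    (fun i => ofReal_le_spannerAllocation (mem_image_of_mem b (mem_univ i)) _) co hco hxco).trans
    (ENNReal.ofReal_le_ofReal ?_)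
  have hΔx := hgap x hx hxstar
  calc (d : ℝ) ^ 2 / (2 * d ^ 2 * f / Δmin ^ 2) = Δmin ^ 2 / (2 * f) := by
        field_simp
    _ ≤ Δmin ^ 2 / f := div_le_div_of_nonneg_left (by positivity) hf (by linarith)
    _ ≤ Δ x ^ 2 / f := by gcongr

theorem sum_spannerAllocation_mul_le (hΔstar : Δ xstar = 0)
    (hgap : ∀ x ∈ A, x ≠ xstar → Δ x ≤ Δmax) {c : ℝ} (hc : 0 ≤ c) :
    ∑ x ∈ A, spannerAllocation xstar (image b univ) c x * ENNReal.ofReal (Δ x) ≤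
      ENNReal.ofReal (d * (c * Δmax)) := by
  set B := image b univ
  have hterm : ∀ x ∈ A, spannerAllocation xstar B c x * ENNReal.ofReal (Δ x) ≤
      if x ∈ B then ENNReal.ofReal (c * Δmax) else 0 := fun x hx => by
    by_cases hxstar : x = xstar
    · simp [hxstar, hΔstar]
    by_cases hxB : x ∈ B
    · simp only [spannerAllocation, hxstar, hxB, if_true, if_false, ENNReal.ofReal_mul hc]
      gcongr
      exact hgap x hx hxstar
    · simp [spannerAllocation, hxstar, hxB]
  calc _ ≤ ∑ x ∈ A, if x ∈ B then ENNReal.ofReal (c * Δmax) else 0 := sum_le_sum hterm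
    _ = (#(A ∩ B) : ℝ≥0∞) * ENNReal.ofReal (c * Δmax) := by
        rw [sum_ite_mem, sum_const, nsmul_eq_mul]
    _ ≤ (d : ℝ≥0∞) * ENNReal.ofReal (c * Δmax) := by
        gcongr
        exact (card_le_card inter_subset_right).trans (card_image_le.trans (by simp))
    _ = ENNReal.ofReal (d * (c * Δmax)) := by
        rw [ENNReal.ofReal_mul (Nat.cast_nonneg d), ENNReal.ofReal_natCast]

end SpannerAllocation

theorem ofReal_mul_sum_filter_pos_le {ι : Type*} (A : Finset ι) (T : ι → ℝ≥0∞) {Δ : ι → ℝ}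
    {Δmin : ℝ} (hgap : ∀ x ∈ A, 0 < Δ x → Δmin ≤ Δ x) :
    ENNReal.ofReal Δmin * ∑ x ∈ A.filter (fun x => 0 < Δ x), T x ≤
      ∑ x ∈ A, T x * ENNReal.ofReal (Δ x) := by
  rw [mul_sum]
  refine (sum_le_sum fun x hx => ?_).trans (sum_le_sum_of_subset (filter_subset _ _))
  obtain ⟨hxA, hΔx⟩ := mem_filter.mp hx
  rw [mul_comm]
  gcongr
  exact hgap x hxA hΔx

theorem stmt12_general {d : ℕ} (A : Finset (Fin d → ℝ))
    (b : Fin d → (Fin d → ℝ)) (hbA : ∀ i, b i ∈ A)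
    (hspanner : ∀ x ∈ A, ∃ c : Fin d → ℝ, (∀ i, |c i| ≤ 1) ∧ x = ∑ i, c i • b i)
    (xstar : Fin d → ℝ)
    (Δ : (Fin d → ℝ) → ℝ) (hΔstar : Δ xstar = 0)
    (Δmin Δmax : ℝ) (hΔmin : 0 < Δmin)
    (hgap : ∀ x ∈ A, x ≠ xstar → Δmin ≤ Δ x ∧ Δ x ≤ Δmax)
    (f : ℝ) (hf : 0 < f)
    (T : (Fin d → ℝ) → ℝ≥0∞)
    (hmin : ∀ S : (Fin d → ℝ) → ℝ≥0∞,
      (∀ x ∈ A, width A S x ≤ ENNReal.ofReal (Δ x ^ 2 / f)) →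
      ∑ x ∈ A, T x * ENNReal.ofReal (Δ x) ≤ ∑ x ∈ A, S x * ENNReal.ofReal (Δ x)) :
    ∑ x ∈ A.filter (fun x => 0 < Δ x), T x ≤
      ENNReal.ofReal (2 * d ^ 3 * f * Δmax / Δmin ^ 3) := by
  set c := 2 * d ^ 2 * f / Δmin ^ 2
  have hpos_gap : ∀ x ∈ A, 0 < Δ x → Δmin ≤ Δ x := fun x hx hΔx =>
    (hgap x hx (by rintro rfl; exact hΔx.ne' hΔstar)).1
  have hcost : ENNReal.ofReal Δmin * ∑ x ∈ A.filter (fun x => 0 < Δ x), T x ≤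
      ENNReal.ofReal (d * (c * Δmax)) :=
    (ofReal_mul_sum_filter_pos_le A T hpos_gap).trans <|
      (hmin _ fun x hx => width_spannerAllocation_le hbA hspanner hΔmin
        (fun y hy hne => (hgap y hy hne).1) hf hx).trans <|
      sum_spannerAllocation_mul_le hΔstar (fun y hy hne => (hgap y hy hne).2) (by positivity)
  calc _ ≤ ENNReal.ofReal (d * (c * Δmax)) / ENNReal.ofReal Δmin := by
        rw [ENNReal.le_div_iff_mul_le (by simp [hΔmin]) (by simp), mul_comm]
        exact hcost
    _ = ENNReal.ofReal (2 * d ^ 3 * f * Δmax / Δmin ^ 3) := by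
        rw [← ENNReal.ofReal_div_of_pos hΔmin]
        congr 1
        simp only [c]
        field_simp

/-- Any solution `T` of the allocation problem (minimise `Σ_x T_x Δ_x` subject to
`‖x‖²_{H_T†} ≤ Δ_x²/f` for all `x`) satisfies `Σ_{Δ_x>0} T_x ≤ 2 d³ f Δ_max / Δ_min³`. -/
theorem stmt12 {d : ℕ} (A : Finset (Fin d → ℝ))
    (hspan : Submodule.span ℝ (A : Set (Fin d → ℝ)) = ⊤)
    (b : Fin d → (Fin d → ℝ)) (hbA : ∀ i, b i ∈ A)
    (hspanner : ∀ x ∈ A, ∃ c : Fin d → ℝ, (∀ i, |c i| ≤ 1) ∧ x = ∑ i, c i • b i)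
    (xstar : Fin d → ℝ) (hxstar : xstar ∈ A)
    (Δ : (Fin d → ℝ) → ℝ) (hΔstar : Δ xstar = 0)
    (Δmin Δmax : ℝ) (hΔmin : 0 < Δmin)
    (hgap : ∀ x ∈ A, x ≠ xstar → Δmin ≤ Δ x ∧ Δ x ≤ Δmax)
    (f : ℝ) (hf : 0 < f)
    (T : (Fin d → ℝ) → ℝ≥0∞)
    (hfeas : ∀ x ∈ A, width A T x ≤ ENNReal.ofReal (Δ x ^ 2 / f))
    (hmin : ∀ S : (Fin d → ℝ) → ℝ≥0∞,
      (∀ x ∈ A, width A S x ≤ ENNReal.ofReal (Δ x ^ 2 / f)) →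
      ∑ x ∈ A, T x * ENNReal.ofReal (Δ x) ≤ ∑ x ∈ A, S x * ENNReal.ofReal (Δ x)) :
    ∑ x ∈ A.filter (fun x => 0 < Δ x), T x ≤
      ENNReal.ofReal (2 * d ^ 3 * f * Δmax / Δmin ^ 3) :=
  stmt12_general A b hbA hspanner xstar Δ hΔstar Δmin Δmax hΔmin hgap f hf T hmin
end

section
/- For the candidate allocation S with S_x = 2d²f/Δ_min² for each element x of a barycentric spanner B and S_{x*} = ∞ (optimal arm given infinite weight, equivalently the constraint for x* is vacuous), the matrix H_S = Σ_{x∈B} S_x x xᵀ satisfies ‖y‖²_{H_S⁻¹} ≤ Δ_min²/(2f) ≤ Δ_y²/(2f) for every suboptimal y ∈ A. -/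
open Matrix Finset

/-!
Writing `B` for the matrix with rows `b i`, the allocation gives `H = α • Bᵀ B` with
`α = 2d²f/Δ_min²`, and `B` is invertible because its rows span. The spanner property writes
`y = cᵀ B` with `|c i| ≤ 1`, and then `yᵀ H⁻¹ y = α⁻¹ ‖c‖² ≤ α⁻¹ d = Δ_min² / (2 d f)`.
-/

namespace Matrix

theorem sum_vecMulVec_self_eq_transpose_mul {m n R : Type*} [Fintype m] [CommRing R]
    (b : m → n → R) : ∑ i, vecMulVec (b i) (b i) = (of b)ᵀ * of b := by
  ext j k
  simp [mul_apply, vecMulVec_apply, sum_apply]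

variable {n : Type*} [Fintype n] [DecidableEq n]

theorem inv_smul₀ {K : Type*} [Field K] (k : K) (A : Matrix n n K) : (k • A)⁻¹ = k⁻¹ • A⁻¹ := by
  rcases eq_or_ne k 0 with rfl | hk
  · simp
  by_cases hA : IsUnit A.det
  · exact inv_smul' _ (Units.mk0 k hk) hA
  · have hkA : ¬IsUnit (k • A).det := by
      rwa [det_smul, IsUnit.mul_iff, and_iff_right ((Ne.isUnit hk).pow _)]
    rw [nonsing_inv_apply_not_isUnit _ hA, nonsing_inv_apply_not_isUnit _ hkA, smul_zero]

theorem isUnit_of_span_range_eq_top {K : Type*} [Field K] {b : n → n → K}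
    (hb : Submodule.span K (Set.range b) = ⊤) : IsUnit (of b) := by
  rw [← vecMul_surjective_iff_isUnit]
  exact LinearMap.range_eq_top.mp ((range_vecMulLinear (of b)).trans hb)

theorem vecMul_dotProduct_inv_transpose_mul_self_mulVec {R : Type*} [CommRing R]
    {B : Matrix n n R} (hB : IsUnit B.det) (c : n → R) :
    (c ᵥ* B) ⬝ᵥ (Bᵀ * B)⁻¹ *ᵥ (c ᵥ* B) = c ⬝ᵥ c := by
  have hBt : IsUnit Bᵀ.det := by rwa [det_transpose]
  rw [← mulVec_transpose, mulVec_mulVec, mul_inv_rev, mul_assoc, nonsing_inv_mul _ hBt, mul_one,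
    mulVec_transpose, ← dotProduct_mulVec, mulVec_mulVec, mul_nonsing_inv _ hB, one_mulVec]

end Matrix

theorem dotProduct_self_le_card {ι : Type*} [Fintype ι] {c : ι → ℝ} (hc : ∀ i, |c i| ≤ 1) :
    c ⬝ᵥ c ≤ Fintype.card ι := by
  rw [Fintype.card_eq_sum_ones, Nat.cast_sum, Nat.cast_one]
  refine sum_le_sum fun i _ => ?_
  rw [← abs_mul_self, abs_mul]
  exact mul_le_one₀ (hc i) (abs_nonneg _) (hc i)

theorem stmt13_general {d : ℕ} (A : Finset (Fin d → ℝ)) (b : Fin d → (Fin d → ℝ))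
    (hspanner : ∀ x ∈ A, ∃ c : Fin d → ℝ, (∀ i, |c i| ≤ 1) ∧ x = ∑ i, c i • b i)
    (hspan : Submodule.span ℝ (Set.range b) = ⊤)
    (f Δmin : ℝ) (hf : 0 < f) (hΔmin : 0 < Δmin)
    (Δ : (Fin d → ℝ) → ℝ)
    (H : Matrix (Fin d) (Fin d) ℝ)
    (hH : H = ∑ i, (2 * d ^ 2 * f / Δmin ^ 2) • vecMulVec (b i) (b i)) :
    ∀ y ∈ A, Δmin ≤ Δ y →
      y ⬝ᵥ H⁻¹.mulVec y ≤ Δmin ^ 2 / (2 * f) ∧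
      Δmin ^ 2 / (2 * f) ≤ Δ y ^ 2 / (2 * f) := by
  intro y hy hΔy
  refine ⟨?_, by gcongr⟩
  obtain ⟨c, hc, hyc⟩ := hspanner y hy
  have hB : IsUnit (of b).det := (isUnit_iff_isUnit_det _).mp (isUnit_of_span_range_eq_top hspan)
  have hy_vecMul : y = c ᵥ* of b := by rw [hyc, vecMul_eq_sum]; rfl
  calc y ⬝ᵥ H⁻¹ *ᵥ y = (2 * d ^ 2 * f / Δmin ^ 2)⁻¹ * (c ⬝ᵥ c) := by
        rw [hH, ← smul_sum, sum_vecMulVec_self_eq_transpose_mul, inv_smul₀, smul_mulVec,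
          dotProduct_smul, hy_vecMul, vecMul_dotProduct_inv_transpose_mul_self_mulVec hB,
          smul_eq_mul]
    _ ≤ (2 * d ^ 2 * f / Δmin ^ 2)⁻¹ * d := by
        gcongr
        simpa using dotProduct_self_le_card hc
    _ = Δmin ^ 2 / (2 * f) * (d : ℝ)⁻¹ := by
        rw [inv_div]
        field_simp
    _ ≤ Δmin ^ 2 / (2 * f) := mul_le_of_le_one_right (by positivity) (Nat.cast_inv_le_one d)

/-- The candidate allocation putting weight `2d²f/Δ_min²` on each element of a barycentric
spanner yields `H_S` with `‖y‖²_{H_S⁻¹} ≤ Δ_min²/(2f) ≤ Δ_y²/(2f)` for every suboptimal `y`. -/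
theorem stmt13 {d : ℕ} (A : Finset (Fin d → ℝ)) (b : Fin d → (Fin d → ℝ))
    (hbA : ∀ i, b i ∈ A)
    (hspanner : ∀ x ∈ A, ∃ c : Fin d → ℝ, (∀ i, |c i| ≤ 1) ∧ x = ∑ i, c i • b i)
    (hspan : Submodule.span ℝ (Set.range b) = ⊤)
    (f Δmin : ℝ) (hf : 0 < f) (hΔmin : 0 < Δmin)
    (Δ : (Fin d → ℝ) → ℝ)
    (H : Matrix (Fin d) (Fin d) ℝ)
    (hH : H = ∑ i, (2 * d ^ 2 * f / Δmin ^ 2) • vecMulVec (b i) (b i)) :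
    ∀ y ∈ A, Δmin ≤ Δ y →
      y ⬝ᵥ H⁻¹.mulVec y ≤ Δmin ^ 2 / (2 * f) ∧
      Δmin ^ 2 / (2 * f) ≤ Δ y ^ 2 / (2 * f) :=
  stmt13_general A b hspanner hspan f Δmin hf hΔmin Δ H hH
end

section
/- Consider a consistent policy for linear bandits (regret R_θ(n) = o(n^p) for all θ and p > 0). If E[T_x(n)] = O(n^p) for every suboptimal x and every p > 0, and E[T_*(n)] = Ω(n), then for every vector y ∈ ℝ^d orthogonal to the unique optimal arm x*, log(n) · yᵀ Ḡ_n⁻¹ x* → 0 as n → ∞, where Ḡ_n = E[Σ_{t≤n} A_t A_tᵀ] (assumed invertible for large n). -/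
open Matrix Finset Filter

/-!
Write `Ḡ = Aᵀ diag(t) A`, the rows of `A` being the arms. By Cramer's rule,
`t_* · yᵀ Ḡ⁻¹ x*` is a combination of the determinants of the matrices `Aᵀ diag(t) W_j`, where
`W_j` is `A` with its `j`-th column replaced by the indicator of `x*`. Expanding by
multilinearity, such a determinant is a sum over maps `f` from coordinates to arms of
`∏ t_{f r}` times a constant times `det A_f`. Each `(∏ t_{f r}) · (det A_f)²` is at most `det Ḡ`,
because `Ḡ` dominates the weighted Gram matrix of the arms in the image of `f` and the
determinant is monotone on positive semidefinite matrices. Hence `t_* · |yᵀ Ḡ⁻¹ x*|` is bounded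
uniformly in the weights, and `T_*(n) ≥ c n` gives `yᵀ Ḡ_n⁻¹ x* = O(1 / n)`.
-/

namespace Matrix

section CommRing

variable {ι n R : Type*} [CommRing R]

theorem det_mul_eq_sum_prod_mul_det_submatrix [Fintype ι] [Fintype n] [DecidableEq n]
    (B : Matrix n ι R) (V : Matrix ι n R) :
    (B * V).det = ∑ f : n → ι, (∏ r, B r (f r)) * (V.submatrix f id).det := by
  let D : MultilinearMap R (fun _ : n => n → R) R := detRowAlternating.toMultilinearMap
  have hrows : B * V = of fun r => ∑ i, B r i • V i := by
    ext r c
    simp [mul_apply, Finset.sum_apply]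
  calc (B * V).det = D fun r => ∑ i, B r i • V i := by rw [hrows]; rfl
    _ = ∑ f : n → ι, D fun r => B r (f r) • V (f r) := D.map_sum _
    _ = _ := by
      refine Finset.sum_congr rfl fun f _ => ?_
      rw [D.map_smul_univ, smul_eq_mul]
      rfl

theorem det_submatrix_eq_zero_of_not_injective [Fintype n] [DecidableEq n] (A : Matrix ι n R)
    {f : n → ι} (hf : ¬ Function.Injective f) : (A.submatrix f id).det = 0 := by
  obtain ⟨r₁, r₂, hfr, hr⟩ := Function.not_injective_iff.mp hf
  exact det_zero_of_row_eq hr (by ext; simp [hfr])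

theorem sum_smul_vecMulVec_eq_transpose_mul_diagonal_mul [Fintype ι] [DecidableEq ι]
    (t : ι → R) (A C : Matrix ι n R) :
    ∑ i, t i • vecMulVec (A i) (C i) = Aᵀ * diagonal t * C := by
  ext r c
  simp [Matrix.sum_apply, mul_apply, vecMulVec_apply, diagonal, mul_comm, mul_left_comm]

end CommRing

section Real

variable {ι n : Type*} [Fintype n]

theorem posSemidef_sum_smul_vecMulVec_self (s : Finset ι) {t : ι → ℝ}
    (ht : ∀ i, 0 ≤ t i) (A : Matrix ι n ℝ) :
    (∑ i ∈ s, t i • vecMulVec (A i) (A i)).PosSemidef :=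
  posSemidef_sum s fun i _ => by
    simpa using (posSemidef_vecMulVec_self_star (A i)).smul (ht i)

theorem posSemidef_transpose_mul_diagonal_mul_self [Fintype ι] [DecidableEq ι] {t : ι → ℝ}
    (ht : ∀ i, 0 ≤ t i) (A : Matrix ι n ℝ) : (Aᵀ * diagonal t * A).PosSemidef := by
  rw [← sum_smul_vecMulVec_eq_transpose_mul_diagonal_mul]
  exact posSemidef_sum_smul_vecMulVec_self univ ht A

variable [DecidableEq n]

theorem PosSemidef.det_le_det_add_vecMulVec_self {B : Matrix n n ℝ} (hB : B.PosSemidef)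
    (v : n → ℝ) : B.det ≤ (B + vecMulVec v v).det := by
  by_cases hu : IsUnit B.det
  · have hfac : B + vecMulVec v v = B * (1 + vecMulVec (B⁻¹ *ᵥ v) v) := by
      rw [Matrix.mul_add, mul_one, mul_vecMulVec, mulVec_mulVec, mul_nonsing_inv _ hu,
        one_mulVec]
    have hq : 0 ≤ v ⬝ᵥ B⁻¹ *ᵥ v := by
      simpa using hB.inv.dotProduct_mulVec_nonneg v
    rw [hfac, det_mul, vecMulVec_eq Unit, det_one_add_replicateCol_mul_replicateRow]
    nlinarith [hB.det_nonneg]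
  · rw [isUnit_iff_ne_zero, not_not] at hu
    rw [hu]
    exact (hB.add (by simpa using posSemidef_vecMulVec_self_star v)).det_nonneg

theorem PosSemidef.det_le_det_add {B C : Matrix n n ℝ} (hB : B.PosSemidef)
    (hC : C.PosSemidef) : B.det ≤ (B + C).det := by
  obtain ⟨m, v, rfl⟩ := posSemidef_iff_eq_sum_vecMulVec.mp hC
  simp only [star_trivial]
  suffices ∀ s : Finset (Fin m), ∀ B : Matrix n n ℝ, B.PosSemidef →
      B.det ≤ (B + ∑ i ∈ s, vecMulVec (v i) (v i)).det from this _ B hB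
  intro s
  induction s using Finset.induction_on with
  | empty => simp
  | insert i s hi ih =>
    intro B hB
    have hBi : (B + vecMulVec (v i) (v i)).PosSemidef := by
      simpa using hB.add (posSemidef_vecMulVec_self_star (v i))
    rw [sum_insert hi, ← add_assoc]
    exact (hB.det_le_det_add_vecMulVec_self (v i)).trans (ih _ hBi)

variable [Fintype ι] [DecidableEq ι]

theorem prod_mul_det_submatrix_sq_le (A : Matrix ι n ℝ) {t : ι → ℝ}
    (ht : ∀ i, 0 ≤ t i) {f : n → ι} (hf : Function.Injective f) :
    (∏ r, t (f r)) * (A.submatrix f id).det ^ 2 ≤ (Aᵀ * diagonal t * A).det := by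
  let e : n ↪ ι := ⟨f, hf⟩
  have hsplit : Aᵀ * diagonal t * A
      = (A.submatrix f id)ᵀ * diagonal (t ∘ f) * A.submatrix f id
        + ∑ i ∈ (univ.map e)ᶜ, t i • vecMulVec (A i) (A i) := by
    rw [← sum_smul_vecMulVec_eq_transpose_mul_diagonal_mul,
      ← sum_smul_vecMulVec_eq_transpose_mul_diagonal_mul, ← sum_add_sum_compl (univ.map e),
      sum_map]
    rfl
  have hdet : ((A.submatrix f id)ᵀ * diagonal (t ∘ f) * A.submatrix f id).det
      = (∏ r, t (f r)) * (A.submatrix f id).det ^ 2 := by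
    simp only [det_mul, det_transpose, det_diagonal, Function.comp_apply]
    ring
  rw [hsplit, ← hdet]
  exact (posSemidef_transpose_mul_diagonal_mul_self (fun r => ht (f r)) _).det_le_det_add
    (posSemidef_sum_smul_vecMulVec_self _ ht A)

theorem exists_abs_det_transpose_mul_diagonal_mul_le (A W : Matrix ι n ℝ) :
    ∃ K, 0 ≤ K ∧ ∀ t : ι → ℝ, (∀ i, 0 ≤ t i) →
      |(Aᵀ * diagonal t * W).det| ≤ K * (Aᵀ * diagonal t * A).det := by
  refine ⟨∑ f : n → ι, |∏ r, W (f r) r| / |(A.submatrix f id).det|,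
    sum_nonneg fun f _ => by positivity, fun t ht => ?_⟩
  have hexp : (Aᵀ * diagonal t * W).det
      = ∑ f : n → ι, (∏ r, W (f r) r * t (f r)) * (A.submatrix f id).det := by
    rw [← det_transpose, transpose_mul, transpose_mul, transpose_transpose, diagonal_transpose,
      ← Matrix.mul_assoc, det_mul_eq_sum_prod_mul_det_submatrix]
    simp [mul_diagonal, mul_comm]
  rw [hexp, sum_mul]
  refine (abs_sum_le_sum_abs _ _).trans (sum_le_sum fun f _ => ?_)
  by_cases h0 : (A.submatrix f id).det = 0
  · simp [h0]
  have hf : Function.Injective f := by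
    contrapose! h0
    exact det_submatrix_eq_zero_of_not_injective A h0
  calc |(∏ r, W (f r) r * t (f r)) * (A.submatrix f id).det|
      = |∏ r, W (f r) r| / |(A.submatrix f id).det|
        * ((∏ r, t (f r)) * (A.submatrix f id).det ^ 2) := by
        rw [prod_mul_distrib, abs_mul, abs_mul, abs_of_nonneg (prod_nonneg fun r _ => ht (f r))]
        field_simp
        rw [sq_abs]
    _ ≤ _ := mul_le_mul_of_nonneg_left (prod_mul_det_submatrix_sq_le A ht hf) (by positivity)

theorem exists_abs_mul_dotProduct_inv_mulVec_le (A : Matrix ι n ℝ) (o : ι) (y : n → ℝ) :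
    ∃ K, ∀ t : ι → ℝ, (∀ i, 0 ≤ t i) →
      |t o * (y ⬝ᵥ (Aᵀ * diagonal t * A)⁻¹ *ᵥ A o)| ≤ K := by
  choose K hK0 hK using fun j =>
    exists_abs_det_transpose_mul_diagonal_mul_le A (A.updateCol j (Pi.single o 1))
  refine ⟨∑ j, |y j| * K j, fun t ht => ?_⟩
  set G := Aᵀ * diagonal t * A
  have hcol : ∀ j, t o * (G.updateCol j (A o)).det
      = (Aᵀ * diagonal t * A.updateCol j (Pi.single o 1)).det := by
    intro j
    rw [mul_updateCol, ← det_updateCol_smul, mulVec_single_one]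
    congr 2
    ext r
    simp [mul_diagonal, mul_comm]
  have hcramer : t o * (y ⬝ᵥ G⁻¹ *ᵥ A o)
      = G.det⁻¹ * ∑ j, y j * (Aᵀ * diagonal t * A.updateCol j (Pi.single o 1)).det := by
    rw [inv_def, Ring.inverse_eq_inv', smul_mulVec, ← cramer_eq_adjugate_mulVec]
    simp only [dotProduct, Pi.smul_apply, cramer_apply, smul_eq_mul, mul_sum, ← hcol]
    exact sum_congr rfl fun j _ => by ring
  have hG : 0 ≤ G.det := (posSemidef_transpose_mul_diagonal_mul_self ht A).det_nonneg
  rw [hcramer, abs_mul, abs_inv, abs_of_nonneg hG]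
  calc G.det⁻¹ * |∑ j, y j * (Aᵀ * diagonal t * A.updateCol j (Pi.single o 1)).det|
      ≤ G.det⁻¹ * ((∑ j, |y j| * K j) * G.det) := by
        rw [sum_mul]
        gcongr
        refine (abs_sum_le_sum_abs _ _).trans (sum_le_sum fun j _ => ?_)
        rw [abs_mul, mul_assoc]
        exact mul_le_mul_of_nonneg_left (hK j t ht) (abs_nonneg _)
    _ ≤ ∑ j, |y j| * K j := by
        rcases hG.eq_or_lt with h0 | hpos
        · rw [← h0]
          simpa using sum_nonneg fun j _ => mul_nonneg (abs_nonneg (y j)) (hK0 j)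
        · rw [mul_comm, mul_assoc, mul_inv_cancel₀ hpos.ne', mul_one]

end Real

end Matrix

theorem tendsto_log_mul_of_abs_mul_le {x s : ℕ → ℝ} {c K : ℝ} (hc : 0 < c)
    (hs : ∀ᶠ n : ℕ in atTop, c * n ≤ s n) (hK : ∀ n, |s n * x n| ≤ K) :
    Tendsto (fun n : ℕ => Real.log n * x n) atTop (nhds 0) := by
  have hbound : ∀ᶠ n : ℕ in atTop, ‖Real.log n * x n‖ ≤ K / c * (Real.log n / n) := by
    filter_upwards [hs, eventually_ge_atTop 1] with n hsn hn
    have hn1 : (1 : ℝ) ≤ n := by exact_mod_cast hn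
    have hcn : 0 < c * n := by positivity
    have hx : |x n| ≤ K / (c * n) := by
      rw [le_div_iff₀ hcn]
      calc |x n| * (c * n) ≤ |x n| * s n := mul_le_mul_of_nonneg_left hsn (abs_nonneg _)
        _ = |s n * x n| := by rw [abs_mul, abs_of_pos (hcn.trans_le hsn), mul_comm]
        _ ≤ K := hK n
    rw [Real.norm_eq_abs, abs_mul, abs_of_nonneg (Real.log_nonneg hn1)]
    calc Real.log n * |x n| ≤ Real.log n * (K / (c * n)) := by gcongr
      _ = K / c * (Real.log n / n) := by field_simp
  have hlog : Tendsto (fun n : ℕ => Real.log n / n) atTop (nhds 0) :=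
    Real.isLittleO_log_id_atTop.tendsto_div_nhds_zero.comp tendsto_natCast_atTop_atTop
  refine squeeze_zero_norm' hbound ?_
  simpa using hlog.const_mul (K / c)

theorem stmt16_general {d k : ℕ} (a : Fin k → (Fin d → ℝ)) (opt : Fin k)
    (t : Fin k → ℕ → ℝ) (ht0 : ∀ i n, 0 ≤ t i n)
    (hopt : ∃ c > 0, ∀ᶠ n : ℕ in atTop, c * n ≤ t opt n)
    (Gbar : ℕ → Matrix (Fin d) (Fin d) ℝ)
    (hGbar : ∀ n, Gbar n = ∑ i, t i n • vecMulVec (a i) (a i)) :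
    ∀ y : Fin d → ℝ, y ⬝ᵥ a opt = 0 →
      Tendsto (fun n : ℕ => Real.log n * (y ⬝ᵥ (Gbar n)⁻¹.mulVec (a opt)))
        atTop (nhds 0) := by
  intro y _
  obtain ⟨c, hc, hlin⟩ := hopt
  obtain ⟨K, hK⟩ := exists_abs_mul_dotProduct_inv_mulVec_le (of a) opt y
  refine tendsto_log_mul_of_abs_mul_le (K := K) hc hlin fun n => ?_
  have hG : Gbar n = (of a)ᵀ * diagonal (fun i => t i n) * of a :=
    (hGbar n).trans (sum_smul_vecMulVec_eq_transpose_mul_diagonal_mul _ (of a) (of a))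
  rw [hG]
  exact hK _ fun i => ht0 i n

/-- For a consistent policy (expected suboptimal play counts `O(n^p)` for every `p > 0`,
expected optimal play count `Ω(n)`), for every `y` orthogonal to the unique optimal arm `x*`,
`log n · yᵀ Ḡ_n⁻¹ x* → 0`, where `Ḡ_n = Σ_x E[T_x(n)] x xᵀ`. -/
theorem stmt16 {d k : ℕ} (a : Fin k → (Fin d → ℝ)) (opt : Fin k)
    (t : Fin k → ℕ → ℝ) (ht0 : ∀ i n, 0 ≤ t i n)
    (hopt : ∃ c > 0, ∀ᶠ n : ℕ in atTop, c * n ≤ t opt n)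
    (hsub : ∀ i, i ≠ opt → ∀ p > 0, ∃ C : ℝ, ∀ n : ℕ, t i n ≤ C * (n : ℝ) ^ p)
    (Gbar : ℕ → Matrix (Fin d) (Fin d) ℝ)
    (hGbar : ∀ n, Gbar n = ∑ i, t i n • vecMulVec (a i) (a i))
    (hinv : ∀ᶠ n : ℕ in atTop, IsUnit (Gbar n).det) :
    ∀ y : Fin d → ℝ, y ⬝ᵥ a opt = 0 →
      Tendsto (fun n : ℕ => Real.log n * (y ⬝ᵥ (Gbar n)⁻¹.mulVec (a opt)))
        atTop (nhds 0) :=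
  stmt16_general a opt t ht0 hopt Gbar hGbar
end
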